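/- arXiv:1405.2768 — 5 statements merged into one kernel-verified Lean document; each statement's English description precedes it below -/
import Mathlib

section
/- Let u₀ ≥ 0 with ∫_ℝ u₀ = 1 and suppose ∫_ℝ e^{t y} u₀(y) dy < ∞ for all t in an interval [0,T). Then the function u(t,x) := e^{t x} (∫_ℝ (4πt)^{−1/2} e^{−(x+t²−y)²/(4t)} u₀(y) dy) / (∫_ℝ e^{t y} u₀(y) dy) satisfies ∫_ℝ u(t,x) dx = 1 for every t ∈ (0,T). -/
/-!
Multiplying the heat kernel of time `t` by `e^{tx}` is an exponential tilt of a Gaussian of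
variance `2t`: it moves the mean by `2t²` and rescales by `e^{ty}`. Hence `e^{tx}` times the heat
flow of `u₀` is the convolution of `e^{ty} u₀` with a probability density, and the mass of a
convolution is the product of the masses.
-/

open Real MeasureTheory Set
open ProbabilityTheory ContinuousLinearMap
open scoped NNReal Convolution

theorem exp_mul_gaussianPDFReal (s m : ℝ) (v : ℝ≥0) (x : ℝ) :
    exp (s * x) * gaussianPDFReal m v x =
      exp (s * m + s ^ 2 * v / 2) * gaussianPDFReal (m + s * v) v x := by
  rcases eq_or_ne v 0 with rfl | hv
  · simp
  have hv' : (v : ℝ) ≠ 0 := by exact_mod_cast hv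
  simp only [gaussianPDFReal]
  rw [mul_left_comm, ← exp_add, mul_left_comm, ← exp_add]
  congr 2
  field_simp
  ring

theorem inv_sqrt_mul_exp_eq_gaussianPDFReal_two_mul {t : ℝ} (ht : 0 ≤ t) (m x : ℝ) :
    (√(4 * π * t))⁻¹ * exp (-(x - m) ^ 2 / (4 * t)) =
      gaussianPDFReal m (2 * t).toNNReal x := by
  rw [gaussianPDFReal, Real.coe_toNNReal _ (by positivity)]
  ring_nf

theorem exp_mul_integral_eq_convolution_gaussianPDFReal (f : ℝ → ℝ) {t : ℝ} (ht : 0 ≤ t)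
    (x : ℝ) :
    exp (t * x) * ∫ y, (√(4 * π * t))⁻¹ * exp (-(x + t ^ 2 - y) ^ 2 / (4 * t)) * f y =
      ((fun y ↦ exp (t * y) * f y) ⋆[mul ℝ ℝ] gaussianPDFReal (t ^ 2) (2 * t).toNNReal) x := by
  rw [convolution_mul, ← integral_const_mul]
  congr 1 with y
  have hmean : y - t ^ 2 + t * (2 * t).toNNReal = t ^ 2 + y := by
    rw [Real.coe_toNNReal _ (by positivity)]; ring
  have hexp : t * (y - t ^ 2) + t ^ 2 * (2 * t).toNNReal / 2 = t * y := by
    rw [Real.coe_toNNReal _ (by positivity)]; ring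
  rw [gaussianPDFReal_sub, show x + t ^ 2 - y = x - (y - t ^ 2) by ring,
    inv_sqrt_mul_exp_eq_gaussianPDFReal_two_mul ht, ← mul_assoc, exp_mul_gaussianPDFReal,
    hmean, hexp]
  ring

theorem integral_mul_pos_of_integral_ne_zero {α : Type*} [MeasurableSpace α] {μ : Measure α}
    {f g : α → ℝ}
    (hg : ∀ x, 0 < g x) (hf : 0 ≤ f) (hgf : Integrable (fun x ↦ g x * f x) μ)
    (h : ∫ x, f x ∂μ ≠ 0) : 0 < ∫ x, g x * f x ∂μ := by
  -- the Bochner integral of a non-integrable function is `0`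
  have hfi : Integrable f μ := by
    by_contra hfi
    exact h (integral_undef hfi)
  have hsupp : Function.support (fun x ↦ g x * f x) = Function.support f := by
    ext x; simp [(hg x).ne']
  rw [integral_pos_iff_support_of_nonneg (fun x ↦ mul_nonneg (hg x).le (hf x)) hgf, hsupp,
    ← integral_pos_iff_support_of_nonneg hf hfi]
  exact (integral_nonneg hf).lt_of_ne' h

theorem mass_conservation_explicit_general (u₀ : ℝ → ℝ) (T : ℝ)
    (h0 : ∀ y, 0 ≤ u₀ y)
    (hmass : (∫ y : ℝ, u₀ y) = 1)
    (hexp : ∀ t ∈ Set.Ico (0:ℝ) T,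
      Integrable (fun y => Real.exp (t * y) * u₀ y))
    (t : ℝ) (ht : t ∈ Set.Ioo (0:ℝ) T) :
    (∫ x : ℝ, Real.exp (t * x) *
        (∫ y : ℝ, (Real.sqrt (4 * Real.pi * t))⁻¹ *
          Real.exp (-(x + t ^ 2 - y) ^ 2 / (4 * t)) * u₀ y) /
        (∫ y : ℝ, Real.exp (t * y) * u₀ y)) = 1 := by
  obtain ⟨ht0, htT⟩ := ht
  have hw : Integrable (fun y ↦ exp (t * y) * u₀ y) := hexp t ⟨ht0.le, htT⟩
  have hZ : 0 < ∫ y, exp (t * y) * u₀ y :=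
    integral_mul_pos_of_integral_ne_zero (fun y ↦ exp_pos _) h0 hw (by simp [hmass])
  have hv : (2 * t).toNNReal ≠ 0 := by simpa using ht0
  simp_rw [exp_mul_integral_eq_convolution_gaussianPDFReal u₀ ht0.le, integral_div,
    integral_convolution (mul ℝ ℝ) hw (integrable_gaussianPDFReal _ _),
    integral_gaussianPDFReal_eq_one _ hv]
  simp [hZ.ne']

theorem mass_conservation_explicit (u₀ : ℝ → ℝ) (T : ℝ)
    (h0 : ∀ y, 0 ≤ u₀ y) (hint : Integrable u₀)
    (hmass : (∫ y : ℝ, u₀ y) = 1)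
    (hexp : ∀ t ∈ Set.Ico (0:ℝ) T,
      Integrable (fun y => Real.exp (t * y) * u₀ y))
    (t : ℝ) (ht : t ∈ Set.Ioo (0:ℝ) T) :
    (∫ x : ℝ, Real.exp (t * x) *
        (∫ y : ℝ, (Real.sqrt (4 * Real.pi * t))⁻¹ *
          Real.exp (-(x + t ^ 2 - y) ^ 2 / (4 * t)) * u₀ y) /
        (∫ y : ℝ, Real.exp (t * y) * u₀ y)) = 1 :=
  mass_conservation_explicit_general u₀ T h0 hmass hexp t ht
end

section
/- With u₀(y) = α e^{−α y} 𝟙_{(0,∞)}(y), the explicit solution u(t,x) = (2π)^{−1/2}(α − t) e^{−(α−t)x} e^{−αt²+α²t} Erf(−(x+t²−2αt)/√(2t)) satisfies sup_{x∈ℝ} |u(t,x)| → 0 as t → α⁻. -/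
/-!
With `b = α - t` and `c = b √(2t)`, every `z ≥ θ(x)` satisfies
`-b x ≤ c z`, so completing the square, `-b x - z²/2 ≤ c²/2 - (z - c)²/2`, bounds
`e^{-b x} Erf(θ(x))` by `√(2π) e^{c²/2}` uniformly in `x`. Hence
`|u(t, x)| ≤ b e^{t (α - t) (2α - t)} ≤ (α - t) e^{2α³}`, which tends to `0` as `t → α⁻`.
-/

open Real MeasureTheory Set Filter

lemma integral_Ioi_exp_neg_sq_div_two_nonneg (θ : ℝ) : 0 ≤ ∫ z in Ioi θ, exp (-z ^ 2 / 2) :=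
  setIntegral_nonneg measurableSet_Ioi fun _ _ => (exp_pos _).le

lemma exp_neg_sq_div_two_eq : (fun z : ℝ => exp (-z ^ 2 / 2)) = fun z => exp (-(1 / 2) * z ^ 2) := by
  ext z; ring_nf

lemma integrable_exp_neg_sq_div_two : Integrable fun z : ℝ => exp (-z ^ 2 / 2) := by
  rw [exp_neg_sq_div_two_eq]
  exact integrable_exp_neg_mul_sq (by norm_num)

lemma integral_exp_neg_sq_div_two : ∫ z : ℝ, exp (-z ^ 2 / 2) = √(2 * π) := by
  rw [exp_neg_sq_div_two_eq, integral_gaussian]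
  congr 1
  field_simp

lemma exp_mul_integral_Ioi_exp_neg_sq_div_two_le {a c θ : ℝ} (hc : 0 ≤ c) (ha : a ≤ c * θ) :
    exp a * ∫ z in Ioi θ, exp (-z ^ 2 / 2) ≤ √(2 * π) * exp (c ^ 2 / 2) := by
  have hshift : Integrable fun z : ℝ => exp (c ^ 2 / 2) * exp (-(z - c) ^ 2 / 2) :=
    (integrable_exp_neg_sq_div_two.comp_sub_right c).const_mul _
  calc exp a * ∫ z in Ioi θ, exp (-z ^ 2 / 2)
      = ∫ z in Ioi θ, exp a * exp (-z ^ 2 / 2) := (integral_const_mul _ _).symm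
    _ ≤ ∫ z in Ioi θ, exp (c ^ 2 / 2) * exp (-(z - c) ^ 2 / 2) := by
        refine setIntegral_mono_on (integrable_exp_neg_sq_div_two.const_mul _).integrableOn
          hshift.integrableOn measurableSet_Ioi fun z hz => ?_
        rw [← exp_add, ← exp_add, exp_le_exp]
        nlinarith [mul_le_mul_of_nonneg_left (le_of_lt (mem_Ioi.1 hz)) hc]
    _ ≤ ∫ z, exp (c ^ 2 / 2) * exp (-(z - c) ^ 2 / 2) :=
        setIntegral_le_integral hshift (.of_forall fun _ => by positivity)
    _ = √(2 * π) * exp (c ^ 2 / 2) := by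
        rw [integral_const_mul, integral_sub_right_eq_self (fun z => exp (-z ^ 2 / 2)),
          integral_exp_neg_sq_div_two, mul_comm]

lemma abs_solution_le {α t : ℝ} (ht : t ∈ Ioo 0 α) (x : ℝ) :
    |(√(2 * π))⁻¹ * (α - t) * exp (-(α - t) * x) * exp (-α * t ^ 2 + α ^ 2 * t) *
        ∫ z in Ioi (-(x + t ^ 2 - 2 * α * t) / √(2 * t)), exp (-z ^ 2 / 2)| ≤
      (α - t) * exp (2 * α ^ 3) := by
  obtain ⟨ht0, htα⟩ := ht
  set b := α - t
  set θ := -(x + t ^ 2 - 2 * α * t) / √(2 * t)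
  set I := ∫ z in Ioi θ, exp (-z ^ 2 / 2)
  have hb : 0 < b := sub_pos.2 htα
  have hS : 0 < √(2 * t) := sqrt_pos.2 (by positivity)
  have hI : exp (-b * x) * I ≤ √(2 * π) * exp ((b * √(2 * t)) ^ 2 / 2) := by
    refine exp_mul_integral_Ioi_exp_neg_sq_div_two_le (by positivity) ?_
    rw [mul_assoc, mul_div_cancel₀ _ hS.ne']
    nlinarith [mul_pos hb (mul_pos ht0 (by linarith : 0 < 2 * α - t))]
  have hsq : (b * √(2 * t)) ^ 2 / 2 = b ^ 2 * t := by
    rw [mul_pow, sq_sqrt (by positivity)]; ring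
  have hexp : -α * t ^ 2 + α ^ 2 * t + b ^ 2 * t ≤ 2 * α ^ 3 := by
    nlinarith [mul_pos ht0 hb, mul_pos (mul_pos ht0 hb) hb, mul_pos (mul_pos ht0 ht0) hb]
  rw [abs_of_nonneg (by have := integral_Ioi_exp_neg_sq_div_two_nonneg θ; positivity)]
  calc (√(2 * π))⁻¹ * b * exp (-b * x) * exp (-α * t ^ 2 + α ^ 2 * t) * I
      = (√(2 * π))⁻¹ * b * exp (-α * t ^ 2 + α ^ 2 * t) * (exp (-b * x) * I) := by ring
    _ ≤ (√(2 * π))⁻¹ * b * exp (-α * t ^ 2 + α ^ 2 * t) * (√(2 * π) * exp (b ^ 2 * t)) := by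
        rw [← hsq]; gcongr
    _ = b * exp (-α * t ^ 2 + α ^ 2 * t + b ^ 2 * t) := by
        rw [exp_add (-α * t ^ 2 + α ^ 2 * t)]; field_simp
    _ ≤ b * exp (2 * α ^ 3) := by gcongr

theorem extinction_uniform_general (α : ℝ) :
    Tendsto
      (fun t : ℝ => ⨆ x : ℝ,
        |(Real.sqrt (2 * Real.pi))⁻¹ * (α - t) * Real.exp (-(α - t) * x) *
          Real.exp (-α * t ^ 2 + α ^ 2 * t) *
          ∫ z in Set.Ioi (-(x + t ^ 2 - 2 * α * t) / Real.sqrt (2 * t)),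
            Real.exp (-z ^ 2 / 2)|)
      (nhdsWithin α (Set.Ioo 0 α)) (nhds 0) := by
  have hbound : Tendsto (fun t => (α - t) * exp (2 * α ^ 3)) (nhdsWithin α (Ioo 0 α)) (nhds 0) := by
    have h : Continuous fun t : ℝ => (α - t) * exp (2 * α ^ 3) := by fun_prop
    simpa using tendsto_nhdsWithin_of_tendsto_nhds (h.tendsto α)
  refine tendsto_of_tendsto_of_tendsto_of_le_of_le' tendsto_const_nhds hbound
    (.of_forall fun t => iSup_nonneg fun x => abs_nonneg _) ?_
  filter_upwards [self_mem_nhdsWithin] with t ht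
  exact ciSup_le fun x => abs_solution_le ht x

theorem extinction_uniform (α : ℝ) (hα : 0 < α) :
    Tendsto
      (fun t : ℝ => ⨆ x : ℝ,
        |(Real.sqrt (2 * Real.pi))⁻¹ * (α - t) * Real.exp (-(α - t) * x) *
          Real.exp (-α * t ^ 2 + α ^ 2 * t) *
          ∫ z in Set.Ioi (-(x + t ^ 2 - 2 * α * t) / Real.sqrt (2 * t)),
            Real.exp (-z ^ 2 / 2)|)
      (nhdsWithin α (Set.Ioo 0 α)) (nhds 0) :=
  extinction_uniform_general α
end

section
/- Let u₀(x) = √(a/(2π)) e^{−a(x−m)²/2} with a > 0, m ∈ ℝ. Then for all t > 0, the explicit solution of the replicator-mutator equation is the Gaussian u(t,x) = √(a(t)/(2π)) e^{−a(t)(x−m(t))²/2}, where a(t) = a/(1+2at) and m(t) = m + t² + t/a. -/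
/-!
The numerator is the heat semigroup applied to a Gaussian, evaluated at `x + t²`: completing the
square shows it is again a Gaussian, with the same centre `m` and precision `a / (1 + 2 a t)`.
The denominator is the moment generating function `exp (t m + t² / (2 a))` of the initial
Gaussian. Multiplying by `exp (t x)` and dividing by the latter only shifts the centre of the
Gaussian, from `m` to `m + t² + t / a`.
-/

open Real MeasureTheory Set

-- Parametrised by the precision `a` (the inverse variance), as in the paper.
noncomputable def gaussianDensity (a m y : ℝ) : ℝ :=
  √(a / (2 * π)) * exp (-a * (y - m) ^ 2 / 2)

noncomputable def heatKernel (t w : ℝ) : ℝ :=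
  (√(4 * π * t))⁻¹ * exp (-w ^ 2 / (4 * t))

theorem integral_exp_neg_mul_sq_add_mul_add {b : ℝ} (hb : 0 < b) (c d : ℝ) :
    ∫ y : ℝ, exp (-b * y ^ 2 + c * y + d) = √(π / b) * exp (d + c ^ 2 / (4 * b)) := by
  have complete_square : ∀ y : ℝ,
      -b * y ^ 2 + c * y + d = -b * (y - c / (2 * b)) ^ 2 + (d + c ^ 2 / (4 * b)) := by
    intro y; field_simp; ring
  simp_rw [complete_square, exp_add, integral_mul_const]
  rw [integral_sub_right_eq_self (fun y => exp (-b * y ^ 2)) (c / (2 * b)), integral_gaussian]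

theorem integral_heatKernel_mul_gaussianDensity {a t : ℝ} (ha : 0 < a) (ht : 0 < t) (m z : ℝ) :
    ∫ y : ℝ, heatKernel t (z - y) * gaussianDensity a m y
      = gaussianDensity (a / (1 + 2 * a * t)) m z := by
  have integrand : ∀ y : ℝ, heatKernel t (z - y) * gaussianDensity a m y
      = (√(4 * π * t))⁻¹ * √(a / (2 * π)) *
        exp (-(1 / (4 * t) + a / 2) * y ^ 2 + (z / (2 * t) + a * m) * y
          + (-z ^ 2 / (4 * t) - a * m ^ 2 / 2)) := by
    intro y
    rw [heatKernel, gaussianDensity, mul_mul_mul_comm, ← exp_add]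
    congr 2
    field_simp
    ring
  have hb : 0 < 1 / (4 * t) + a / 2 := by positivity
  simp_rw [integrand, integral_const_mul, integral_exp_neg_mul_sq_add_mul_add hb, ← mul_assoc]
  rw [gaussianDensity]
  congr 1
  · have := pi_pos
    rw [← sqrt_inv, ← sqrt_mul (by positivity), ← sqrt_mul (by positivity)]
    congr 1
    field_simp
    ring
  · congr 1
    field_simp
    ring

theorem integral_exp_mul_gaussianDensity {a : ℝ} (ha : 0 < a) (m s : ℝ) :
    ∫ y : ℝ, exp (s * y) * gaussianDensity a m y = exp (s * m + s ^ 2 / (2 * a)) := by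
  have integrand : ∀ y : ℝ, exp (s * y) * gaussianDensity a m y
      = √(a / (2 * π)) * exp (-(a / 2) * y ^ 2 + (s + a * m) * y + -(a * m ^ 2) / 2) := by
    intro y
    rw [gaussianDensity, mul_left_comm, ← exp_add]
    congr 2
    ring
  simp_rw [integrand, integral_const_mul, integral_exp_neg_mul_sq_add_mul_add (half_pos ha),
    ← mul_assoc]
  have := pi_pos
  rw [← sqrt_mul (by positivity), show a / (2 * π) * (π / (a / 2)) = 1 by field_simp,
    sqrt_one, one_mul]
  congr 1
  field_simp
  ring

theorem exp_mul_gaussianDensity_div_exp {a t : ℝ} (ha : 0 < a) (ht : 0 < t) (m x : ℝ) :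
    exp (t * x) * gaussianDensity (a / (1 + 2 * a * t)) m (x + t ^ 2) /
        exp (t * m + t ^ 2 / (2 * a))
      = gaussianDensity (a / (1 + 2 * a * t)) (m + t ^ 2 + t / a) x := by
  rw [gaussianDensity, gaussianDensity, mul_left_comm, mul_div_assoc, ← exp_add, ← exp_sub]
  congr 2
  field_simp
  ring

theorem gaussian_propagation (a m : ℝ) (ha : 0 < a) (t x : ℝ) (ht : 0 < t) :
    Real.exp (t * x) *
        (∫ y : ℝ, (Real.sqrt (4 * Real.pi * t))⁻¹ *
          Real.exp (-(x + t ^ 2 - y) ^ 2 / (4 * t)) *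
          (Real.sqrt (a / (2 * Real.pi)) * Real.exp (-a * (y - m) ^ 2 / 2))) /
        (∫ y : ℝ, Real.exp (t * y) *
          (Real.sqrt (a / (2 * Real.pi)) * Real.exp (-a * (y - m) ^ 2 / 2)))
    = Real.sqrt ((a / (1 + 2 * a * t)) / (2 * Real.pi)) *
        Real.exp (-(a / (1 + 2 * a * t)) * (x - (m + t ^ 2 + t / a)) ^ 2 / 2) := by
  change exp (t * x) * (∫ y, heatKernel t (x + t ^ 2 - y) * gaussianDensity a m y) /
      (∫ y, exp (t * y) * gaussianDensity a m y)
    = gaussianDensity (a / (1 + 2 * a * t)) (m + t ^ 2 + t / a) x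
  rw [integral_heatKernel_mul_gaussianDensity ha ht, integral_exp_mul_gaussianDensity ha,
    exp_mul_gaussianDensity_div_exp ha ht]
end

section
/- Let u₀ ≥ 0 be integrable with ∫ u₀ = 1 and supp u₀ ⊆ [−M, M]. Define u(t,x) = (4πt)^{−1/2} (∫_ℝ e^{−(x−t²−y)²/(4t)} e^{t y} u₀(y) dy)/(∫_ℝ e^{t y} u₀(y) dy). Then for all t ≥ 1 and all x ∈ ℝ, |u(t,x) − (4πt)^{−1/2} e^{−(x−t²)²/(4t)}| ≤ C M / t for some absolute constant C (one may take C = sup_{z} |z e^{−z²}|/√(4π) times an absolute factor). -/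
/-!
Tilting `u₀` by `e^{ty}` and normalising turns the solution into a weighted average of the shifted
Gaussians `y ↦ e^{-(x - t² - y)²/(4t)}` over `y ∈ [-M, M]`. By the mean value theorem with
`sup |z e^{-z²}| ≤ 1`, each of them differs from the unshifted one by at most `|y|/√t ≤ M/√t`,
hence so does their average; the prefactor `(4πt)^{-1/2} ≤ (2√t)⁻¹` gives `M/(2t)`.
-/

open Real MeasureTheory

theorem hasDerivAt_exp_neg_sq (z : ℝ) :
    HasDerivAt (fun z : ℝ => exp (-z ^ 2)) (-2 * mulExpNegMulSq 1 z) z := by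
  convert ((hasDerivAt_pow 2 z).fun_neg).exp using 1
  rw [mulExpNegSq_apply]
  ring_nf

theorem lipschitzWith_two_exp_neg_sq : LipschitzWith 2 (fun z : ℝ => exp (-z ^ 2)) := by
  refine lipschitzWith_of_nnnorm_deriv_le (fun z => (hasDerivAt_exp_neg_sq z).differentiableAt)
    fun z => ?_
  rw [(hasDerivAt_exp_neg_sq z).deriv, ← NNReal.coe_le_coe, coe_nnnorm, norm_mul, Real.norm_eq_abs,
    Real.norm_eq_abs]
  simpa using mul_le_mul_of_nonneg_left (abs_mulExpNegMulSq_one_le_one z) zero_le_two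

theorem abs_exp_neg_sq_div_sub_le {t : ℝ} (ht : 0 < t) (a y : ℝ) :
    |exp (-(a - y) ^ 2 / (4 * t)) - exp (-a ^ 2 / (4 * t))| ≤ |y| / √t := by
  have hs : 0 < 2 * √t := by positivity
  have hscale : ∀ b : ℝ, -b ^ 2 / (4 * t) = -(b / (2 * √t)) ^ 2 := fun b => by
    rw [div_pow, mul_pow, sq_sqrt ht.le]
    ring
  have := lipschitzWith_two_exp_neg_sq.dist_le_mul ((a - y) / (2 * √t)) (a / (2 * √t))
  rw [Real.dist_eq, Real.dist_eq, ← sub_div, sub_sub_cancel_left, abs_div, abs_neg,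
    abs_of_pos hs] at this
  rw [hscale, hscale]
  convert this using 1
  field_simp
  norm_num

theorem MeasureTheory.Integrable.continuous_mul_of_support_subset_compact {α : Type*}
    [TopologicalSpace α] [T2Space α] [MeasurableSpace α] [OpensMeasurableSpace α] {μ : Measure α} {f g : α → ℝ}
    {K : Set α} (hf : Integrable f μ) (hK : IsCompact K) (hsupp : Function.support f ⊆ K)
    (hg : Continuous g) : Integrable (fun x => g x * f x) μ := by
  rw [← integrableOn_iff_integrable_of_support_subset
    ((Function.support_mul_subset_right g f).trans hsupp)]
  exact hf.integrableOn.continuousOn_mul hg.continuousOn hK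

theorem integral_mul_pos_of_pos {α : Type*} [MeasurableSpace α] {μ : Measure α} {f g : α → ℝ}
    (hg : ∀ x, 0 < g x) (hf : 0 ≤ f) (hf_pos : 0 < ∫ x, f x ∂μ)
    (hgf : Integrable (fun x => g x * f x) μ) : 0 < ∫ x, g x * f x ∂μ := by
  have hf_int : Integrable f μ := .of_integral_ne_zero hf_pos.ne'
  rw [integral_pos_iff_support_of_nonneg (fun x => mul_nonneg (hg x).le (hf x)) hgf,
    Function.support_mul_of_ne_zero_left (fun x => (hg x).ne'),
    ← integral_pos_iff_support_of_nonneg hf hf_int]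
  exact hf_pos

theorem abs_integral_mul_div_integral_sub_le {α : Type*} [MeasurableSpace α] {μ : Measure α}
    {g w : α → ℝ} {c ε : ℝ} (hw : ∀ x, 0 ≤ w x) (hw_int : Integrable w μ)
    (hgw_int : Integrable (fun x => g x * w x) μ) (hw_pos : 0 < ∫ x, w x ∂μ)
    (hg : ∀ x, w x ≠ 0 → |g x - c| ≤ ε) :
    |(∫ x, g x * w x ∂μ) / (∫ x, w x ∂μ) - c| ≤ ε := by
  have hpointwise : ∀ x, ‖g x * w x - c * w x‖ ≤ ε * w x := fun x => by
    rcases eq_or_ne (w x) 0 with hx | hx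
    · simp [hx]
    · rw [← sub_mul, norm_mul, Real.norm_eq_abs, Real.norm_eq_abs, abs_of_nonneg (hw x)]
      exact mul_le_mul_of_nonneg_right (hg x hx) (hw x)
  have hnum : |(∫ x, g x * w x ∂μ) - c * ∫ x, w x ∂μ| ≤ ε * ∫ x, w x ∂μ := by
    rw [← integral_const_mul, ← integral_sub hgw_int (hw_int.const_mul c), ← Real.norm_eq_abs,
      ← integral_const_mul]
    exact norm_integral_le_of_norm_le (hw_int.const_mul ε) (.of_forall hpointwise)
  rw [div_sub' hw_pos.ne', abs_div, abs_of_pos hw_pos, div_le_iff₀ hw_pos, mul_comm]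
  exact hnum

theorem long_time_compact_support :
    ∃ C > 0, ∀ (M : ℝ) (u₀ : ℝ → ℝ), 0 < M →
      (∀ y, 0 ≤ u₀ y) → Integrable u₀ → (∫ y : ℝ, u₀ y) = 1 →
      Function.support u₀ ⊆ Set.Icc (-M) M →
      ∀ t ≥ (1:ℝ), ∀ x : ℝ,
        |(Real.sqrt (4 * Real.pi * t))⁻¹ *
            (∫ y : ℝ, Real.exp (-(x - t ^ 2 - y) ^ 2 / (4 * t)) *
              Real.exp (t * y) * u₀ y) /
            (∫ y : ℝ, Real.exp (t * y) * u₀ y)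
          - (Real.sqrt (4 * Real.pi * t))⁻¹ * Real.exp (-(x - t ^ 2) ^ 2 / (4 * t))|
          ≤ C * M / t := by
  refine ⟨1, one_pos, fun M u₀ _ hu₀_nonneg hu₀_int hu₀_mass hsupp t ht x => ?_⟩
  have ht0 : 0 < t := one_pos.trans_le ht
  have hw_int : Integrable (fun y => exp (t * y) * u₀ y) :=
    hu₀_int.continuous_mul_of_support_subset_compact isCompact_Icc hsupp (by fun_prop)
  have hgw_int :
      Integrable (fun y => exp (-(x - t ^ 2 - y) ^ 2 / (4 * t)) * (exp (t * y) * u₀ y)) :=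
    hw_int.continuous_mul_of_support_subset_compact isCompact_Icc
      ((Function.support_mul_subset_right _ _).trans hsupp) (by fun_prop)
  have hw_pos : 0 < ∫ y, exp (t * y) * u₀ y :=
    integral_mul_pos_of_pos (fun y => exp_pos _) hu₀_nonneg (hu₀_mass ▸ one_pos) hw_int
  have havg := abs_integral_mul_div_integral_sub_le (c := exp (-(x - t ^ 2) ^ 2 / (4 * t)))
    (ε := M / √t) (fun y => mul_nonneg (exp_pos _).le (hu₀_nonneg y)) hw_int hgw_int hw_pos
    fun y hy => (abs_exp_neg_sq_div_sub_le ht0 _ y).trans <| by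
      gcongr
      exact abs_le.mpr (hsupp (right_ne_zero_of_mul hy))
  have hprefactor : (√(4 * π * t))⁻¹ ≤ (2 * √t)⁻¹ := by
    refine inv_anti₀ (by positivity) ((le_sqrt (by positivity) (by positivity)).mpr ?_)
    rw [mul_pow, sq_sqrt ht0.le]
    nlinarith [pi_gt_three]
  have hnum : ∫ y, exp (-(x - t ^ 2 - y) ^ 2 / (4 * t)) * exp (t * y) * u₀ y
      = ∫ y, exp (-(x - t ^ 2 - y) ^ 2 / (4 * t)) * (exp (t * y) * u₀ y) := by
    simp only [mul_assoc]
  rw [hnum, mul_div_assoc, ← mul_sub, abs_mul, abs_of_pos (by positivity)]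
  calc _ ≤ (2 * √t)⁻¹ * (M / √t) := by gcongr
    _ = M / (2 * t) := by
        field_simp
        rw [sq_sqrt ht0.le]
    _ ≤ 1 * M / t := by
        rw [one_mul]
        gcongr
        linarith
end

section
/- If w solves the heat equation ∂_t w = ∂_{xx} w with initial data u₀, then for t > 0 the function v(t,x) := cosh(2t)^{−1/2} e^{−tanh(2t) x²/2} · w(tanh(2t)/2, x/cosh(2t)) solves ∂_t v = ∂_{xx} v − x² v with v(0,·) = u₀. -/
open Real

private lemma comp_hasDerivAt_two {w : ℝ → ℝ → ℝ}
    (hw : ContDiff ℝ (⊤ : ℕ∞) (fun p : ℝ × ℝ => w p.1 p.2))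
    {a b : ℝ → ℝ} {a' b' t : ℝ} (ha : HasDerivAt a a' t) (hb : HasDerivAt b b' t) :
    HasDerivAt (fun τ => w (a τ) (b τ))
      (a' * deriv (fun τ => w τ (b t)) (a t) + b' * deriv (fun y => w (a t) y) (b t)) t := by
  set W : ℝ × ℝ → ℝ := fun p => w p.1 p.2 with hW
  have hWd : DifferentiableAt ℝ W (a t, b t) := (hw.differentiable (by simp)) _
  have hF : HasFDerivAt W (fderiv ℝ W (a t, b t)) (a t, b t) := hWd.hasFDerivAt
  set L := fderiv ℝ W (a t, b t) with hL
  have h1 : HasDerivAt (fun τ => w τ (b t)) (L (1, 0)) (a t) := by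
    have := hF.comp_hasDerivAt (a t) ((hasDerivAt_id (a t)).prodMk (hasDerivAt_const (a t) (b t)))
    exact this
  have h2 : HasDerivAt (fun y => w (a t) y) (L (0, 1)) (b t) := by
    have := hF.comp_hasDerivAt (b t) ((hasDerivAt_const (b t) (a t)).prodMk (hasDerivAt_id (b t)))
    exact this
  have hcomp := hF.comp_hasDerivAt t (ha.prodMk hb)
  have key : L (a', b') = a' * L (1, 0) + b' * L (0, 1) := by
    have hab : ((a', b') : ℝ × ℝ) = a' • ((1:ℝ), (0:ℝ)) + b' • ((0:ℝ), (1:ℝ)) := by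
      simp [Prod.ext_iff]
    rw [hab, map_add, map_smul, map_smul, smul_eq_mul, smul_eq_mul]
  rw [h1.deriv, h2.deriv, ← key]
  exact hcomp

private lemma lens_alg (e W0 W1 W2 r s c x : ℝ) (hc : c ≠ 0) (hr : r ≠ 0)
    (hs2 : s^2 = c^2 - 1) :
    (-(s/(r*c)) * e + r⁻¹ * (e * (-x^2/c^2))) * W0
      + r⁻¹*e*(1/c^2*W1 + -(2*x*s)/c^2*W2)
    = (r⁻¹*(e*(-(s/c)*x)*(-(s/c)*x) + e*(-(s/c))) * W0
        + r⁻¹*(e*(-(s/c)*x))*(W2*c⁻¹)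
        + (r⁻¹*(e*(-(s/c)*x))*(W2*c⁻¹) + r⁻¹*e*(W1*c⁻¹*c⁻¹)))
      - x^2 * (r⁻¹*e*W0) := by
  field_simp
  linear_combination (-(e * W0 * x^2)) * hs2

theorem lens_transform (u₀ : ℝ → ℝ) (w : ℝ → ℝ → ℝ)
    (hw : ContDiff ℝ (⊤ : ℕ∞) (fun p : ℝ × ℝ => w p.1 p.2))
    (hw0 : ∀ x, w 0 x = u₀ x)
    (hheat : ∀ t x, deriv (fun τ => w τ x) t = deriv (deriv (fun y => w t y)) x) :
    let v : ℝ → ℝ → ℝ := fun t x =>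
      (Real.sqrt (Real.cosh (2 * t)))⁻¹ * Real.exp (-Real.tanh (2 * t) * x ^ 2 / 2) *
        w (Real.tanh (2 * t) / 2) (x / Real.cosh (2 * t))
    (∀ x, v 0 x = u₀ x) ∧
    ∀ t x, 0 < t → deriv (fun τ => v τ x) t =
      deriv (deriv (fun y => v t y)) x - x ^ 2 * v t x := by
  intro v
  constructor
  · intro x
    simp [v, hw0]
  · intro t x _
    simp only [v]
    set c := Real.cosh (2 * t) with hc_def
    set s := Real.sinh (2 * t) with hs_def
    set th := Real.tanh (2 * t) with hth_def
    have hc : 0 < c := Real.cosh_pos _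
    have hc1 : c ≠ 0 := ne_of_gt hc
    have hsqne : Real.sqrt c ≠ 0 := ne_of_gt (Real.sqrt_pos.mpr hc)
    have hident : c ^ 2 - s ^ 2 = 1 := Real.cosh_sq_sub_sinh_sq _
    have hs2 : s ^ 2 = c ^ 2 - 1 := by linarith
    have hth1 : th = s / c := Real.tanh_eq_sinh_div_cosh _
    -- basic derivatives
    have h2 : HasDerivAt (fun τ : ℝ => 2 * τ) 2 t := by
      simpa using (hasDerivAt_id t).const_mul 2
    have hcosh : HasDerivAt (fun τ => Real.cosh (2 * τ)) (s * 2) t := by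
      exact (Real.hasDerivAt_cosh (2 * t)).comp t h2
    have hsinh : HasDerivAt (fun τ => Real.sinh (2 * τ)) (c * 2) t := by
      exact (Real.hasDerivAt_sinh (2 * t)).comp t h2
    have htanh : HasDerivAt (fun τ => Real.tanh (2 * τ)) (2 / c ^ 2) t := by
      have heq : (fun τ => Real.tanh (2 * τ)) = fun τ => Real.sinh (2 * τ) / Real.cosh (2 * τ) :=
        funext fun τ => Real.tanh_eq_sinh_div_cosh _
      rw [heq]
      have hdiv := hsinh.div hcosh hc1
      refine hdiv.congr_deriv ?_
      have : c * 2 * c - s * (s * 2) = 2 := by linear_combination 2 * hident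
      rw [← hc_def, ← hs_def, this]
    -- slice smoothness
    have hslice : ContDiff ℝ (⊤ : ℕ∞) (fun y => w (th / 2) y) := by
      have := hw.comp ((contDiff_const (c := (th / 2 : ℝ))).prodMk contDiff_id)
      exact this
    set D := deriv (fun u => w (th / 2) u) with hD_def
    have hslice' : ContDiff ℝ (⊤ : ℕ∞) (fun y => w (th / 2) y) := hslice.of_le (by simp)
    have hD_cd : ContDiff ℝ (⊤ : ℕ∞) D := by
      rw [hD_def]
      exact (contDiff_infty_iff_deriv.mp hslice').2
    ----------------------------------------------------------------
    -- time derivative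
    ----------------------------------------------------------------
    have hfc : HasDerivAt (fun τ => (Real.sqrt (Real.cosh (2 * τ)))⁻¹)
        (-(s / (Real.sqrt c * c))) t := by
      have hsqrt : HasDerivAt (fun τ => Real.sqrt (Real.cosh (2 * τ)))
          (1 / (2 * Real.sqrt c) * (s * 2)) t :=
        (Real.hasDerivAt_sqrt hc1).comp t hcosh
      have := hsqrt.inv hsqne
      refine this.congr_deriv ?_
      rw [Real.sq_sqrt hc.le]
      field_simp
    have hgc : HasDerivAt (fun τ => Real.exp (-Real.tanh (2 * τ) * x ^ 2 / 2))
        (Real.exp (-th * x ^ 2 / 2) * (-(x ^ 2) / c ^ 2)) t := by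
      have hin : HasDerivAt (fun τ => -Real.tanh (2 * τ) * x ^ 2 / 2)
          (-(x ^ 2) / c ^ 2) t := by
        have := (htanh.neg.mul_const (x ^ 2)).div_const 2
        refine this.congr_deriv ?_
        ring
      simpa using hin.exp
    have hhc : HasDerivAt (fun τ => w (Real.tanh (2 * τ) / 2) (x / Real.cosh (2 * τ)))
        ((1 / c ^ 2) * deriv (fun τ => w τ (x / c)) (th / 2)
          + (-(2 * x * s) / c ^ 2) * D (x / c)) t := by
      have ha : HasDerivAt (fun τ => Real.tanh (2 * τ) / 2) (1 / c ^ 2) t := by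
        have := htanh.div_const 2
        refine this.congr_deriv ?_; ring
      have hb : HasDerivAt (fun τ => x / Real.cosh (2 * τ)) (-(2 * x * s) / c ^ 2) t := by
        have := (hasDerivAt_const t x).div hcosh hc1
        refine this.congr_deriv ?_; ring
      have := comp_hasDerivAt_two hw ha hb
      simpa [hD_def] using this
    have hLt : HasDerivAt (fun τ =>
        (Real.sqrt (Real.cosh (2 * τ)))⁻¹ * Real.exp (-Real.tanh (2 * τ) * x ^ 2 / 2) *
          w (Real.tanh (2 * τ) / 2) (x / Real.cosh (2 * τ)))
        ((-(s / (Real.sqrt c * c)) * Real.exp (-th * x ^ 2 / 2)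
            + (Real.sqrt c)⁻¹ * (Real.exp (-th * x ^ 2 / 2) * (-(x ^ 2) / c ^ 2)))
            * w (th / 2) (x / c)
          + (Real.sqrt c)⁻¹ * Real.exp (-th * x ^ 2 / 2) *
            ((1 / c ^ 2) * deriv (fun τ => w τ (x / c)) (th / 2)
              + (-(2 * x * s) / c ^ 2) * D (x / c))) t :=
      (hfc.mul hgc).mul hhc
    ----------------------------------------------------------------
    -- first space derivative
    ----------------------------------------------------------------
    have hexp : ∀ y : ℝ, HasDerivAt (fun z => Real.exp (-th * z ^ 2 / 2))
        (Real.exp (-th * y ^ 2 / 2) * (-th * y)) y := by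
      intro y
      have hin : HasDerivAt (fun z : ℝ => -th * z ^ 2 / 2) (-th * y) y := by
        have := ((hasDerivAt_pow 2 y).const_mul (-th)).div_const 2
        refine this.congr_deriv ?_
        push_cast
        ring
      simpa using hin.exp
    have hA : ∀ y : ℝ, HasDerivAt (fun z => (Real.sqrt c)⁻¹ * Real.exp (-th * z ^ 2 / 2))
        ((Real.sqrt c)⁻¹ * (Real.exp (-th * y ^ 2 / 2) * (-th * y))) y :=
      fun y => (hexp y).const_mul _
    have hB : ∀ y : ℝ, HasDerivAt (fun z => w (th / 2) (z / c)) (D (y / c) * c⁻¹) y := by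
      intro y
      have hd : HasDerivAt (fun u => w (th / 2) u) (D (y / c)) (y / c) := by
        rw [hD_def]
        exact ((hslice.differentiable (by simp)) _).hasDerivAt
      have hi : HasDerivAt (fun z : ℝ => z / c) c⁻¹ y := by
        simpa using (hasDerivAt_id y).div_const c
      have := hd.comp y hi
      exact this
    set G : ℝ → ℝ := fun y =>
      (Real.sqrt c)⁻¹ * (Real.exp (-th * y ^ 2 / 2) * (-th * y)) * w (th / 2) (y / c)
        + (Real.sqrt c)⁻¹ * Real.exp (-th * y ^ 2 / 2) * (D (y / c) * c⁻¹) with hG_def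
    have hG : ∀ y : ℝ, HasDerivAt (fun z =>
        (Real.sqrt c)⁻¹ * Real.exp (-th * z ^ 2 / 2) * w (th / 2) (z / c)) (G y) y :=
      fun y => (hA y).mul (hB y)
    have hderiv1 : deriv (fun y =>
        (Real.sqrt c)⁻¹ * Real.exp (-th * y ^ 2 / 2) * w (th / 2) (y / c)) = G :=
      funext fun y => (hG y).deriv
    ----------------------------------------------------------------
    -- second space derivative
    ----------------------------------------------------------------
    have hQ : HasDerivAt (fun y => (Real.sqrt c)⁻¹ * (Real.exp (-th * y ^ 2 / 2) * (-th * y)))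
        ((Real.sqrt c)⁻¹ * (Real.exp (-th * x ^ 2 / 2) * (-th * x) * (-th * x)
          + Real.exp (-th * x ^ 2 / 2) * (-th))) x := by
      have hlin : HasDerivAt (fun y : ℝ => -th * y) (-th) x := by
        simpa using (hasDerivAt_id x).const_mul (-th)
      exact ((hexp x).mul hlin).const_mul _
    have hRd : HasDerivAt (fun y => D (y / c) * c⁻¹) (deriv D (x / c) * c⁻¹ * c⁻¹) x := by
      have hd : HasDerivAt D (deriv D (x / c)) (x / c) :=
        ((hD_cd.differentiable (by simp)) _).hasDerivAt
      have hi : HasDerivAt (fun z : ℝ => z / c) c⁻¹ x := by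
        simpa using (hasDerivAt_id x).div_const c
      have := (hd.comp x hi).mul_const c⁻¹
      exact this
    have hG' : HasDerivAt G
        (((Real.sqrt c)⁻¹ * (Real.exp (-th * x ^ 2 / 2) * (-th * x) * (-th * x)
            + Real.exp (-th * x ^ 2 / 2) * (-th))) * w (th / 2) (x / c)
          + (Real.sqrt c)⁻¹ * (Real.exp (-th * x ^ 2 / 2) * (-th * x)) * (D (x / c) * c⁻¹)
          + (((Real.sqrt c)⁻¹ * (Real.exp (-th * x ^ 2 / 2) * (-th * x))) * (D (x / c) * c⁻¹)
            + (Real.sqrt c)⁻¹ * Real.exp (-th * x ^ 2 / 2) * (deriv D (x / c) * c⁻¹ * c⁻¹))) x := by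
      rw [hG_def]
      exact (hQ.mul (hB x)).add ((hA x).mul hRd)
    ----------------------------------------------------------------
    -- put it together
    ----------------------------------------------------------------
    rw [hLt.deriv, hderiv1, hG'.deriv, hheat (th / 2) (x / c), ← hD_def]
    rw [hth1]
    have hsq : Real.sqrt c * Real.sqrt c = c := Real.mul_self_sqrt hc.le
    exact lens_alg _ _ _ _ _ _ _ _ hc1 hsqne hs2
end
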